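/- The bilinear antisymmetric bracket on ℝ⁷ determined by [e₁,e₂] = (√3/6)e₄, [e₁,e₃] = (√3/12)e₅ − (1/4)e₆, [e₂,e₃] = −(1/4)e₅ − (√3/12)e₆, [e₃,e₄] = −(√3/6)e₇, [e₁,e₅] = −(1/4)e₇, [e₁,e₆] = (√3/12)e₇, [e₂,e₅] = (√3/12)e₇, [e₂,e₆] = (1/4)e₇ (all other brackets of basis vectors being zero) satisfies the Jacobi identity, so it defines a Lie algebra 𝔫₁₂, and the diagonal linear map D : ℝ⁷ → ℝ⁷ with D(e₁) = e₁, D(e₂) = e₂, D(e₃) = e₃, D(e₄) = 2e₄, D(e₅) = 2e₅, D(e₆) = 2e₆, D(e₇) = 3e₇ is a derivation of 𝔫₁₂, i.e. D[x,y] = [Dx,y] + [x,Dy] for all x, y ∈ ℝ⁷. -/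
import Mathlib


/-- The bilinear antisymmetric bracket of 𝔫₁₂: [e₁,e₂] = (√3/6)e₄,
[e₁,e₃] = (√3/12)e₅ − (1/4)e₆, [e₂,e₃] = −(1/4)e₅ − (√3/12)e₆,
[e₃,e₄] = −(√3/6)e₇, [e₁,e₅] = −(1/4)e₇, [e₁,e₆] = (√3/12)e₇,
[e₂,e₅] = (√3/12)e₇, [e₂,e₆] = (1/4)e₇ (0-based indices shifted by one),
all other basis brackets zero, extended bilinearly. -/
noncomputable def brN12 (x y : Fin 7 → ℝ) : Fin 7 → ℝ :=
  ![0, 0, 0,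
    (Real.sqrt 3 / 6) * (x 0 * y 1 - x 1 * y 0),
    (Real.sqrt 3 / 12) * (x 0 * y 2 - x 2 * y 0)
      - (1 / 4) * (x 1 * y 2 - x 2 * y 1),
    -(1 / 4) * (x 0 * y 2 - x 2 * y 0)
      - (Real.sqrt 3 / 12) * (x 1 * y 2 - x 2 * y 1),
    -(Real.sqrt 3 / 6) * (x 2 * y 3 - x 3 * y 2)
      - (1 / 4) * (x 0 * y 4 - x 4 * y 0)
      + (Real.sqrt 3 / 12) * (x 0 * y 5 - x 5 * y 0)
      + (Real.sqrt 3 / 12) * (x 1 * y 4 - x 4 * y 1)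
      + (1 / 4) * (x 1 * y 5 - x 5 * y 1)]

/-- The diagonal linear map D with D(e₁) = e₁, D(e₂) = e₂, D(e₃) = e₃,
D(e₄) = 2e₄, D(e₅) = 2e₅, D(e₆) = 2e₆, D(e₇) = 3e₇. -/
def DN12 (x : Fin 7 → ℝ) : Fin 7 → ℝ :=
  fun i => ![1, 1, 1, 2, 2, 2, 3] i * x i


section helpers
variable {α : Type*} (a0 a1 a2 a3 a4 a5 a6 : α)
lemma vec7_0 (h : 0 < 7) : ![a0,a1,a2,a3,a4,a5,a6] ⟨0,h⟩ = a0 := rfl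
lemma vec7_1 (h : 1 < 7) : ![a0,a1,a2,a3,a4,a5,a6] ⟨1,h⟩ = a1 := rfl
lemma vec7_2 (h : 2 < 7) : ![a0,a1,a2,a3,a4,a5,a6] ⟨2,h⟩ = a2 := rfl
lemma vec7_3 (h : 3 < 7) : ![a0,a1,a2,a3,a4,a5,a6] ⟨3,h⟩ = a3 := rfl
lemma vec7_4 (h : 4 < 7) : ![a0,a1,a2,a3,a4,a5,a6] ⟨4,h⟩ = a4 := rfl
lemma vec7_5 (h : 5 < 7) : ![a0,a1,a2,a3,a4,a5,a6] ⟨5,h⟩ = a5 := rfl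
lemma vec7_6 (h : 6 < 7) : ![a0,a1,a2,a3,a4,a5,a6] ⟨6,h⟩ = a6 := rfl
lemma vec7_0' : ![a0,a1,a2,a3,a4,a5,a6] (0 : Fin 7) = a0 := rfl
lemma vec7_1' : ![a0,a1,a2,a3,a4,a5,a6] (1 : Fin 7) = a1 := rfl
lemma vec7_2' : ![a0,a1,a2,a3,a4,a5,a6] (2 : Fin 7) = a2 := rfl
lemma vec7_3' : ![a0,a1,a2,a3,a4,a5,a6] (3 : Fin 7) = a3 := rfl
lemma vec7_4' : ![a0,a1,a2,a3,a4,a5,a6] (4 : Fin 7) = a4 := rfl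
lemma vec7_5' : ![a0,a1,a2,a3,a4,a5,a6] (5 : Fin 7) = a5 := rfl
lemma vec7_6' : ![a0,a1,a2,a3,a4,a5,a6] (6 : Fin 7) = a6 := rfl
end helpers

set_option maxHeartbeats 2000000 in
/-- the bracket of 𝔫₁₂ satisfies the Jacobi identity (so 𝔫₁₂ is
a Lie algebra) and D is a derivation of 𝔫₁₂. -/
theorem N12_jacobi_and_derivation :
    (∀ x y z : Fin 7 → ℝ,
      brN12 (brN12 x y) z + brN12 (brN12 y z) x + brN12 (brN12 z x) y = 0) ∧
    (∀ x y : Fin 7 → ℝ,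
      DN12 (brN12 x y) = brN12 (DN12 x) y + brN12 x (DN12 y)) := by
  constructor
  · intro x y z
    funext i
    fin_cases i <;>
      simp only [brN12, Pi.add_apply, Pi.zero_apply,
        vec7_0, vec7_1, vec7_2, vec7_3, vec7_4, vec7_5, vec7_6,
        vec7_0', vec7_1', vec7_2', vec7_3', vec7_4', vec7_5', vec7_6'] <;>
      (try ring) <;> (ring_nf; rw [Real.sq_sqrt (by norm_num : (0:ℝ) ≤ 3)]; ring)
  · intro x y
    funext i
    fin_cases i <;>
      simp only [brN12, DN12, Pi.add_apply,
        vec7_0, vec7_1, vec7_2, vec7_3, vec7_4, vec7_5, vec7_6,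
        vec7_0', vec7_1', vec7_2', vec7_3', vec7_4', vec7_5', vec7_6'] <;> ring
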